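/- The Gordon–Traldi four-variable subset expansion specializes to Whitney's corank-nullity expansion by setting x=1 and z=1, and to Tutte's basis activities expansion by setting w=0 and y=0. In particular, with w=0, y=0 the only subsets contributing nonzero terms are the bases of M. -/

import Mathlib

/-!
Turn the basis family into a Mathlib `Matroid`. An element `e ∈ S` is Gordon–Traldi externally
active iff it is the least element of a circuit inside `S ∪ {e}`, i.e. iff it lies in the closure
of the elements of `S` above it, i.e. iff adding it to them does not raise the rank. Dually,
`e ∉ S` is internally active iff some cocircuit through `e` avoids `S` and the elements of
`E \ S` below `e`, i.e. iff adding `e` to that set raises the rank. Adding the elements of `S`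
from the top down to `∅`, the rank stays put exactly at the externally active ones; adding
those of `E \ S` from the bottom up to `S`, it grows exactly at the internally active ones. So
`|L(S) ∩ S| = |S| - r(S)` and `|I(S) \ S| = r(E) - r(S)`, and both vanish exactly when `S` is a
basis, which gives all three specializations.
-/

noncomputable section
attribute [local instance] Classical.propDecidable

namespace TutteActivities

variable {α : Type*} [DecidableEq α]

/-- `ℬ` is the family of bases of a matroid on ground set `E`:
nonempty, contained in `E`, and satisfying the basis-exchange axiom. -/
def IsMatroidOn (E : Finset α) (ℬ : Finset (Finset α)) : Prop :=
  ℬ.Nonempty ∧ (∀ B ∈ ℬ, B ⊆ E) ∧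
    ∀ B₁ ∈ ℬ, ∀ B₂ ∈ ℬ, ∀ e ∈ B₁ \ B₂, ∃ f ∈ B₂ \ B₁, insert f (B₁.erase e) ∈ ℬ

/-- A set is independent if it is contained in a basis. -/
def Indep (ℬ : Finset (Finset α)) (S : Finset α) : Prop := ∃ B ∈ ℬ, S ⊆ B

/-- A circuit is a minimal dependent subset of the ground set. -/
def Circuit (E : Finset α) (ℬ : Finset (Finset α)) (C : Finset α) : Prop :=
  C ⊆ E ∧ ¬ Indep ℬ C ∧ ∀ D ⊂ C, Indep ℬ D

/-- A cocircuit is a minimal subset of the ground set meeting every basis. -/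
def Cocircuit (E : Finset α) (ℬ : Finset (Finset α)) (C : Finset α) : Prop :=
  C ⊆ E ∧ (∀ B ∈ ℬ, (B ∩ C).Nonempty) ∧ ∀ D ⊂ C, ∃ B ∈ ℬ, B ∩ D = ∅

/-- The rank of a set `A`: the largest size of the intersection of a basis with `A`. -/
def rank (ℬ : Finset (Finset α)) (A : Finset α) : ℕ := ℬ.sup fun B => (B ∩ A).card

/-- `e` is the minimum element of `C` with respect to the order given by labels `σ`. -/
def IsMinOf (σ : α → ℕ) (e : α) (C : Finset α) : Prop := e ∈ C ∧ ∀ g ∈ C, σ e ≤ σ g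

/-- `f ∉ B` is externally active: `f` is the minimum of the fundamental circuit of `f`,
i.e. of a circuit contained in `B ∪ {f}`. -/
def ExtActive (E : Finset α) (ℬ : Finset (Finset α)) (σ : α → ℕ) (B : Finset α) (f : α) :
    Prop :=
  f ∉ B ∧ ∃ C, Circuit E ℬ C ∧ C ⊆ insert f B ∧ IsMinOf σ f C

/-- `e ∈ B` is internally active: `e` is the minimum of the fundamental cocircuit of `e`,
i.e. of a cocircuit contained in `(E \ B) ∪ {e}`. -/
def IntActive (E : Finset α) (ℬ : Finset (Finset α)) (σ : α → ℕ) (B : Finset α) (e : α) :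
    Prop :=
  e ∈ B ∧ ∃ C, Cocircuit E ℬ C ∧ C ⊆ insert e (E \ B) ∧ IsMinOf σ e C

/-- The set of externally active elements of a basis `B`. -/
def extSet (E : Finset α) (ℬ : Finset (Finset α)) (σ : α → ℕ) (B : Finset α) : Finset α :=
  E.filter (ExtActive E ℬ σ B)

/-- The set of internally active elements of a basis `B`. -/
def intSet (E : Finset α) (ℬ : Finset (Finset α)) (σ : α → ℕ) (B : Finset α) : Finset α :=
  E.filter (IntActive E ℬ σ B)

/-- The Tutte polynomial via Whitney's corank-nullity expansion. -/
def tutte (E : Finset α) (ℬ : Finset (Finset α)) (x y : ℤ) : ℤ :=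
  ∑ A ∈ E.powerset, (x - 1) ^ (rank ℬ E - rank ℬ A) * (y - 1) ^ (A.card - rank ℬ A)

/-- Gordon–Traldi internal activity for an arbitrary subset `S`:
elements `e` that are minimum in some cocircuit contained in `(E \ S) ∪ {e}`. -/
def subI (E : Finset α) (ℬ : Finset (Finset α)) (σ : α → ℕ) (S : Finset α) : Finset α :=
  E.filter fun e => ∃ C, Cocircuit E ℬ C ∧ C ⊆ insert e (E \ S) ∧ IsMinOf σ e C

/-- Gordon–Traldi external activity for an arbitrary subset `S`:
elements `e` that are minimum in some circuit contained in `S ∪ {e}`. -/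
def subL (E : Finset α) (ℬ : Finset (Finset α)) (σ : α → ℕ) (S : Finset α) : Finset α :=
  E.filter fun e => ∃ C, Circuit E ℬ C ∧ C ⊆ insert e S ∧ IsMinOf σ e C

open Finset

theorem card_filter_insert_eq_succ_add {β : Type*} [LinearOrder β] (r : Finset α → ℕ)
    (hmono : ∀ e A, r A ≤ r (insert e A)) (hstep : ∀ e A, r (insert e A) ≤ r A + 1)
    {σ : α → β} (hσ : Function.Injective σ) (S T : Finset α) :
    #{e ∈ T | r (insert e (S ∪ {g ∈ T | σ g < σ e})) = r (S ∪ {g ∈ T | σ g < σ e}) + 1} +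
      r S = r (S ∪ T) := by
  induction T using Finset.induction_on_max_value σ with
  | empty => simp
  | insert a T haT hmax ih =>
    have hlt : ∀ x ∈ T, σ x < σ a := fun x hx =>
      (hmax x hx).lt_of_ne fun h => haT (hσ h ▸ hx)
    have below_a : {g ∈ insert a T | σ g < σ a} = T := by
      rw [filter_insert, if_neg (lt_irrefl _), filter_true_of_mem hlt]
    have below_e : ∀ e ∈ T, {g ∈ insert a T | σ g < σ e} = {g ∈ T | σ g < σ e} := by
      intro e he
      rw [filter_insert, if_neg (hlt e he).asymm]
    rw [filter_insert, below_a, filter_congr fun e he => by rw [below_e e he], union_insert]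
    have := hmono a (S ∪ T)
    have := hstep a (S ∪ T)
    split_ifs with h
    · rw [card_insert_of_notMem fun h' => haT (mem_filter.1 h').1]
      omega
    · omega

theorem card_filter_insert_eq_self_add (r : Finset α → ℕ)
    (hmono : ∀ e A, r A ≤ r (insert e A)) (hstep : ∀ e A, r (insert e A) ≤ r A + 1)
    (hempty : r ∅ = 0) {σ : α → ℕ} (hσ : Function.Injective σ) (S : Finset α) :
    #{e ∈ S | r (insert e {g ∈ S | σ e < σ g}) = r {g ∈ S | σ e < σ g}} + r S = #S := by
  have key := card_filter_insert_eq_succ_add r hmono hstep (σ := OrderDual.toDual ∘ σ)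
    (OrderDual.toDual.injective.comp hσ) ∅ S
  simp only [empty_union, hempty, add_zero, Function.comp_apply, OrderDual.toDual_lt_toDual] at key
  rw [← key, ← card_filter_add_card_filter_not (s := S)
    (fun e => r (insert e {g ∈ S | σ e < σ g}) = r {g ∈ S | σ e < σ g})]
  congr 2
  refine filter_congr fun e _ => ?_
  have := hmono e {g ∈ S | σ e < σ g}
  have := hstep e {g ∈ S | σ e < σ g}
  omega

theorem _root_.Matroid.IsCocircuit.notMem_closure_of_disjoint {β : Type*} {M : Matroid β}
    {K X : Set β} {e : β} (hK : M.IsCocircuit K) (heK : e ∈ K) (hKX : Disjoint K X) :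
    e ∉ M.closure X := by
  intro he
  have heX : e ∉ X := hKX.notMem_of_mem_left heK
  obtain ⟨C, hCX, hC, heC⟩ := M.exists_isCircuit_of_mem_closure he heX
  refine hC.inter_isCocircuit_ne_singleton hK (e := e) (Set.eq_singleton_iff_unique_mem.2
    ⟨⟨heC, heK⟩, fun x ⟨hxC, hxK⟩ => ?_⟩)
  exact (Set.mem_insert_iff.1 (hCX hxC)).resolve_right (hKX.notMem_of_mem_left hxK)

theorem _root_.Matroid.exists_isCocircuit_of_notMem_closure {β : Type*} {M : Matroid β}
    {X : Set β} {e : β} (he : e ∈ M.E) (heX : e ∉ M.closure X) :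
    ∃ K, M.IsCocircuit K ∧ e ∈ K ∧ Disjoint K X := by
  obtain ⟨I, hI⟩ := M.exists_isBasis' X
  rw [← hI.closure_eq_closure] at heX
  have heI : e ∉ I := fun h => heX (M.mem_closure_of_mem' h he)
  have hind : M.Indep (insert e I) := (hI.indep.insert_indep_iff_of_notMem heI).2 ⟨he, heX⟩
  obtain ⟨K, hK, hKI⟩ := hind.exists_isCocircuit_inter_eq_mem (Set.mem_insert e I)
  have hdisj : Disjoint K I := Set.disjoint_left.2 fun x hxK hxI => by
    have : x ∈ K ∩ insert e I := ⟨hxK, Set.mem_insert_of_mem e hxI⟩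
    rw [hKI, Set.mem_singleton_iff] at this
    exact heI (this ▸ hxI)
  refine ⟨K, hK, Set.inter_subset_left (hKI ▸ Set.mem_singleton e), Set.disjoint_left.2 ?_⟩
  intro x hxK hxX
  have hxcl : x ∈ M.closure I := hI.closure_eq_closure ▸ M.mem_closure_of_mem' hxX
    (hK.subset_ground hxK)
  exact hK.notMem_closure_of_disjoint hxK hdisj hxcl

theorem forall_ssubset_iff_forall_mem_erase {p : Finset α → Prop}
    (hp : ∀ S T, S ⊆ T → p T → p S) {C : Finset α} :
    (∀ D ⊂ C, p D) ↔ ∀ e ∈ C, p (C.erase e) := by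
  refine ⟨fun h e he => h _ (erase_ssubset he), fun h D hD => ?_⟩
  obtain ⟨e, he, hDe⟩ := ssubset_iff_exists_subset_erase.1 hD
  exact hp _ _ hDe (h e he)

theorem exists_subset_coe_iff {β : Type*} {P : Set β → Prop} {T : Finset β} :
    (∃ C ⊆ (T : Set β), P C) ↔ ∃ C ⊆ T, P C := by
  refine ⟨fun ⟨C, hCT, hC⟩ => ?_, fun ⟨C, hCT, hC⟩ => ⟨C, coe_subset.2 hCT, hC⟩⟩
  obtain ⟨C, rfl⟩ := (T.finite_toSet.subset hCT).exists_finset_coe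
  exact ⟨C, coe_subset.1 hCT, hC⟩

theorem rank_le_rank_insert (ℬ : Finset (Finset α)) (e : α) (A : Finset α) :
    rank ℬ A ≤ rank ℬ (insert e A) :=
  Finset.sup_mono_fun fun _ _ => card_le_card (inter_subset_inter_left (subset_insert e A))

theorem rank_insert_le_add_one (ℬ : Finset (Finset α)) (e : α) (A : Finset α) :
    rank ℬ (insert e A) ≤ rank ℬ A + 1 :=
  Finset.sup_le fun B hB => calc
    #(B ∩ insert e A) ≤ #(insert e (B ∩ A)) := card_le_card fun x => by
      simp only [mem_inter, mem_insert]; tauto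
    _ ≤ #(B ∩ A) + 1 := card_insert_le _ _
    _ ≤ rank ℬ A + 1 := Nat.add_le_add_right (le_sup (f := fun B => #(B ∩ A)) hB) 1

theorem rank_empty (ℬ : Finset (Finset α)) : rank ℬ ∅ = 0 := by
  simp [rank]

namespace IsMatroidOn

variable {E : Finset α} {ℬ : Finset (Finset α)}

def toMatroid (hM : IsMatroidOn E ℬ) : Matroid α :=
  Matroid.ofIsBaseOfFinite E.finite_toSet (fun B => ∃ B' ∈ ℬ, (B' : Set α) = B)
    (let ⟨B, hB⟩ := hM.1; ⟨B, B, hB, rfl⟩)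
    (by
      rintro _ _ ⟨B₁, hB₁, rfl⟩ ⟨B₂, hB₂, rfl⟩ e he
      obtain ⟨f, hf, hB⟩ := hM.2.2 B₁ hB₁ B₂ hB₂ e (by simpa using he)
      exact ⟨f, by simpa using hf, _, hB, by simp⟩)
    (by rintro _ ⟨B, hB, rfl⟩; exact coe_subset.2 (hM.2.1 B hB))

@[simp] theorem toMatroid_E (hM : IsMatroidOn E ℬ) : hM.toMatroid.E = E := rfl

theorem isBase_toMatroid_iff (hM : IsMatroidOn E ℬ) {B : Set α} :
    hM.toMatroid.IsBase B ↔ ∃ B' ∈ ℬ, (B' : Set α) = B := Iff.rfl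

theorem isBase_toMatroid_coe_iff (hM : IsMatroidOn E ℬ) {B : Finset α} :
    hM.toMatroid.IsBase B ↔ B ∈ ℬ := by
  simp [isBase_toMatroid_iff]

theorem indep_toMatroid_coe_iff (hM : IsMatroidOn E ℬ) {S : Finset α} :
    hM.toMatroid.Indep S ↔ Indep ℬ S := by
  simp [Matroid.indep_iff, isBase_toMatroid_iff, Indep]

theorem isCircuit_toMatroid_coe_iff (hM : IsMatroidOn E ℬ) {C : Finset α} :
    hM.toMatroid.IsCircuit C ↔ Circuit E ℬ C := by
  simp only [Matroid.isCircuit_iff_dep_forall_sdiff_singleton_indep, Matroid.dep_iff,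
    ← coe_erase, indep_toMatroid_coe_iff, toMatroid_E, coe_subset, mem_coe, Circuit,
    forall_ssubset_iff_forall_mem_erase (p := Indep ℬ) fun _ _ hST ⟨B, hB, hTB⟩ =>
      ⟨B, hB, hST.trans hTB⟩]
  tauto

theorem isCocircuit_toMatroid_coe_iff (hM : IsMatroidOn E ℬ) {C : Finset α} :
    hM.toMatroid.IsCocircuit C ↔ Cocircuit E ℬ C := by
  have meets_all_iff (D : Finset α) : (∀ B, hM.toMatroid.IsBase B → ((D : Set α) ∩ B).Nonempty)
      ↔ ∀ B ∈ ℬ, (B ∩ D).Nonempty := by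
    simp [isBase_toMatroid_iff, ← coe_inter, inter_comm]
  have key : hM.toMatroid.IsCocircuit C ↔
      (∀ B ∈ ℬ, (B ∩ C).Nonempty) ∧ ∀ D ⊂ C, ∃ B ∈ ℬ, B ∩ D = ∅ := by
    rw [Matroid.isCocircuit_iff_minimal, Set.minimal_iff_forall_sdiff_singleton
      fun _ _ hT hTS B hB => (hT B hB).mono (Set.inter_subset_inter_left B hTS),
      forall_ssubset_iff_forall_mem_erase fun S T hST ⟨B, hB, hBT⟩ =>
        ⟨B, hB, subset_empty.1 (hBT ▸ inter_subset_inter_left hST)⟩]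
    simp only [mem_coe, ← coe_erase, meets_all_iff, not_forall, not_nonempty_iff_eq_empty,
      exists_prop]
  exact ⟨fun h => ⟨coe_subset.1 h.subset_ground, key.1 h⟩, fun h => key.2 h.2⟩

theorem coe_rank (hM : IsMatroidOn E ℬ) (A : Finset α) :
    (rank ℬ A : ℕ∞) = hM.toMatroid.eRk A := by
  refine le_antisymm ?_ ?_
  · obtain ⟨B, hB, hBA⟩ := exists_mem_eq_sup ℬ hM.1 fun B => #(B ∩ A)
    rw [rank, hBA, ← Set.encard_coe_eq_coe_finsetCard, coe_inter]
    exact Matroid.Indep.encard_le_eRk_of_subset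
      (((hM.isBase_toMatroid_coe_iff).2 hB).indep.subset Set.inter_subset_left)
      Set.inter_subset_right
  · obtain ⟨I, hI⟩ := hM.toMatroid.exists_isBasis' A
    obtain ⟨_, ⟨B, hB, rfl⟩, hIB⟩ := hI.indep.exists_isBase_superset
    rw [← hI.encard_eq_eRk]
    calc I.encard ≤ ((B ∩ A : Finset α) : Set α).encard :=
          Set.encard_le_encard (by rw [coe_inter]; exact Set.subset_inter hIB hI.subset)
      _ = #(B ∩ A) := Set.encard_coe_eq_coe_finsetCard _
      _ ≤ rank ℬ A := by exact_mod_cast le_sup (f := fun B => #(B ∩ A)) hB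

theorem rank_insert_eq_iff_mem_closure (hM : IsMatroidOn E ℬ) {e : α} (he : e ∈ E)
    (A : Finset α) : rank ℬ (insert e A) = rank ℬ A ↔ e ∈ hM.toMatroid.closure A := by
  rw [← Nat.cast_inj (R := ℕ∞), hM.coe_rank, hM.coe_rank, coe_insert]
  by_cases hcl : e ∈ hM.toMatroid.closure A
  · rw [← Matroid.eRk_insert_closure_eq, Set.insert_eq_of_mem hcl, Matroid.eRk_closure_eq]
    exact iff_of_true rfl hcl
  · rw [Matroid.eRk_insert_eq_add_one ⟨he, hcl⟩, ← hM.coe_rank]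
    exact iff_of_false (by norm_cast; omega) hcl

theorem mem_iff_rank_eq_card_and_eq_rank_ground (hM : IsMatroidOn E ℬ) (S : Finset α) :
    S ∈ ℬ ↔ rank ℬ S = #S ∧ rank ℬ S = rank ℬ E := by
  rw [← hM.isBase_toMatroid_coe_iff, ← Nat.cast_inj (R := ℕ∞), ← Nat.cast_inj (R := ℕ∞),
    hM.coe_rank, hM.coe_rank, ← Set.encard_coe_eq_coe_finsetCard,
    ← Matroid.indep_iff_eRk_eq_encard_of_finite S.finite_toSet, ← hM.toMatroid_E,
    Matroid.eRk_ground]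
  refine ⟨fun hB => ⟨hB.indep, hB.eRk_eq_eRank⟩, fun ⟨hI, hr⟩ => ?_⟩
  exact hI.isBase_of_eRk_ge S.finite_toSet hr.ge

theorem rank_insert_eq_iff_exists_circuit (hM : IsMatroidOn E ℬ) {e : α} (he : e ∈ E)
    {X : Finset α} (heX : e ∉ X) :
    rank ℬ (insert e X) = rank ℬ X ↔ ∃ C, Circuit E ℬ C ∧ e ∈ C ∧ C ⊆ insert e X := by
  rw [hM.rank_insert_eq_iff_mem_closure he, Matroid.mem_closure_iff_exists_isCircuit heX,
    ← coe_insert, exists_subset_coe_iff]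
  simp only [hM.isCircuit_toMatroid_coe_iff, mem_coe]
  tauto

theorem rank_insert_eq_add_one_iff_exists_cocircuit (hM : IsMatroidOn E ℬ) {e : α}
    (he : e ∈ E) (X : Finset α) :
    rank ℬ (insert e X) = rank ℬ X + 1 ↔ ∃ K, Cocircuit E ℬ K ∧ e ∈ K ∧ Disjoint K X := by
  have h₁ := rank_le_rank_insert ℬ e X
  have h₂ := rank_insert_le_add_one ℬ e X
  rw [show rank ℬ (insert e X) = rank ℬ X + 1 ↔ ¬rank ℬ (insert e X) = rank ℬ X by omega,
    hM.rank_insert_eq_iff_mem_closure he]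
  constructor
  · intro hcl
    obtain ⟨K, hK, heK, hKX⟩ := Matroid.exists_isCocircuit_of_notMem_closure he hcl
    obtain ⟨K, rfl⟩ := (E.finite_toSet.subset hK.subset_ground).exists_finset_coe
    exact ⟨K, (hM.isCocircuit_toMatroid_coe_iff).1 hK, heK, disjoint_coe.1 hKX⟩
  · rintro ⟨K, hK, heK, hKX⟩
    exact ((hM.isCocircuit_toMatroid_coe_iff).2 hK).notMem_closure_of_disjoint heK
      (disjoint_coe.2 hKX)

end IsMatroidOn

section Activities

variable {E : Finset α} {ℬ : Finset (Finset α)} {σ : α → ℕ}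

theorem subset_insert_and_isMinOf_iff (hσ : Function.Injective σ) {e : α} {C T : Finset α} :
    C ⊆ insert e T ∧ IsMinOf σ e C ↔ e ∈ C ∧ C ⊆ insert e {g ∈ T | σ e < σ g} := by
  constructor
  · rintro ⟨hCT, heC, hmin⟩
    refine ⟨heC, fun g hg => ?_⟩
    by_cases hge : g = e
    · exact hge ▸ mem_insert_self g _
    · refine mem_insert_of_mem (mem_filter.2 ⟨?_, (hmin g hg).lt_of_ne fun h => hge (hσ h).symm⟩)
      exact (mem_insert.1 (hCT hg)).resolve_left hge
  · rintro ⟨heC, hCT⟩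
    refine ⟨hCT.trans (insert_subset_insert e (filter_subset _ T)), heC, fun g hg => ?_⟩
    rcases mem_insert.1 (hCT hg) with rfl | hg
    · exact le_rfl
    · exact (mem_filter.1 hg).2.le

theorem mem_subL_inter_iff (hM : IsMatroidOn E ℬ) (hσ : Function.Injective σ) {S : Finset α}
    (hS : S ⊆ E) {e : α} :
    e ∈ subL E ℬ σ S ∩ S ↔
      e ∈ S ∧ rank ℬ (insert e {g ∈ S | σ e < σ g}) = rank ℬ {g ∈ S | σ e < σ g} := by
  simp only [subL, mem_inter, mem_filter, subset_insert_and_isMinOf_iff hσ]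
  refine ⟨fun ⟨⟨_, hC⟩, heS⟩ => ⟨heS, ?_⟩, fun ⟨heS, hr⟩ => ⟨⟨hS heS, ?_⟩, heS⟩⟩
  · exact (hM.rank_insert_eq_iff_exists_circuit (hS heS) (by simp)).2 hC
  · exact (hM.rank_insert_eq_iff_exists_circuit (hS heS) (by simp)).1 hr

theorem mem_subI_sdiff_iff (hM : IsMatroidOn E ℬ) (hσ : Function.Injective σ) {S : Finset α}
    (hS : S ⊆ E) {e : α} :
    e ∈ subI E ℬ σ S \ S ↔ e ∈ E \ S ∧
      rank ℬ (insert e (S ∪ {g ∈ E \ S | σ g < σ e})) =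
        rank ℬ (S ∪ {g ∈ E \ S | σ g < σ e}) + 1 := by
  simp only [subI, mem_sdiff, mem_filter, subset_insert_and_isMinOf_iff hσ]
  rw [and_right_comm]
  refine and_congr_right fun ⟨heE, heS⟩ => ?_
  set Y := insert e {g ∈ E \ S | σ e < σ g}
  have hYE : Y ⊆ E := insert_subset heE ((filter_subset _ _).trans sdiff_subset)
  have hcompl : S ∪ {g ∈ E \ S | σ g < σ e} = E \ Y := by
    ext g
    have := hσ.eq_iff (a := g) (b := e)
    have := @hS g
    simp only [Y, mem_union, mem_filter, mem_sdiff, mem_insert]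
    grind
  rw [hM.rank_insert_eq_add_one_iff_exists_cocircuit heE, hcompl]
  exact exists_congr fun K => and_congr_right fun hK => and_congr_right fun _ =>
    (disjoint_sdiff_iff_le hK.1 hYE).symm

theorem card_subL_inter_add_rank (hM : IsMatroidOn E ℬ) (hσ : Function.Injective σ)
    {S : Finset α} (hS : S ⊆ E) : #(subL E ℬ σ S ∩ S) + rank ℬ S = #S := by
  have hL : subL E ℬ σ S ∩ S =
      {e ∈ S | rank ℬ (insert e {g ∈ S | σ e < σ g}) = rank ℬ {g ∈ S | σ e < σ g}} := by
    ext e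
    rw [mem_subL_inter_iff hM hσ hS, mem_filter]
  rw [hL]
  exact card_filter_insert_eq_self_add (rank ℬ) (rank_le_rank_insert ℬ)
    (rank_insert_le_add_one ℬ) (rank_empty ℬ) hσ S

theorem card_subI_sdiff_add_rank (hM : IsMatroidOn E ℬ) (hσ : Function.Injective σ)
    {S : Finset α} (hS : S ⊆ E) : #(subI E ℬ σ S \ S) + rank ℬ S = rank ℬ E := by
  have hI : subI E ℬ σ S \ S = {e ∈ E \ S | rank ℬ (insert e (S ∪ {g ∈ E \ S | σ g < σ e})) =
      rank ℬ (S ∪ {g ∈ E \ S | σ g < σ e}) + 1} := by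
    ext e
    rw [mem_subI_sdiff_iff hM hσ hS, mem_filter]
  rw [hI, ← congrArg (rank ℬ) (union_sdiff_of_subset hS)]
  -- `convert` only has to identify the `Decidable` instances of `<` on `ℕ` and on a linear order
  convert card_filter_insert_eq_succ_add (rank ℬ) (rank_le_rank_insert ℬ)
    (rank_insert_le_add_one ℬ) hσ S (E \ S)

theorem mem_iff_subI_sdiff_eq_empty_and_subL_inter_eq_empty (hM : IsMatroidOn E ℬ)
    (hσ : Function.Injective σ) {S : Finset α} (hS : S ⊆ E) :
    S ∈ ℬ ↔ subI E ℬ σ S \ S = ∅ ∧ subL E ℬ σ S ∩ S = ∅ := by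
  have hI := card_subI_sdiff_add_rank hM hσ hS
  have hL := card_subL_inter_add_rank hM hσ hS
  rw [hM.mem_iff_rank_eq_card_and_eq_rank_ground, ← card_eq_zero, ← card_eq_zero]
  omega

theorem subI_inter_eq_intSet (B : Finset α) : subI E ℬ σ B ∩ B = intSet E ℬ σ B := by
  ext e
  simp only [subI, intSet, IntActive, mem_inter, mem_filter]
  tauto

theorem subL_sdiff_eq_extSet (B : Finset α) : subL E ℬ σ B \ B = extSet E ℬ σ B := by
  ext e
  simp only [subL, extSet, ExtActive, mem_sdiff, mem_filter]
  tauto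

end Activities

/-- Specializations of the Gordon–Traldi expansion: setting `x = 1, z = 1` recovers
Whitney's corank-nullity expansion; setting `w = 0, y = 0` recovers Tutte's basis
activities expansion; and with `w = 0, y = 0` only bases contribute nonzero terms,
i.e. every non-basis subset has an internally active absent element or an externally
active present element. -/
theorem gordon_traldi_specializations
    (E : Finset α) (ℬ : Finset (Finset α)) (hM : IsMatroidOn E ℬ)
    (σ : α → ℕ) (hσ : Function.Injective σ) :
    (∀ w y : ℤ,
      ∑ S ∈ E.powerset, w ^ (subI E ℬ σ S \ S).card * y ^ (subL E ℬ σ S ∩ S).card =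
        ∑ A ∈ E.powerset,
          w ^ (rank ℬ E - rank ℬ A) * y ^ (A.card - rank ℬ A)) ∧
    (∀ x z : ℤ,
      ∑ S ∈ E.powerset,
          x ^ (subI E ℬ σ S ∩ S).card * (0 : ℤ) ^ (subI E ℬ σ S \ S).card *
            (0 : ℤ) ^ (subL E ℬ σ S ∩ S).card * z ^ (subL E ℬ σ S \ S).card =
        ∑ B ∈ ℬ, x ^ (intSet E ℬ σ B).card * z ^ (extSet E ℬ σ B).card) ∧
    (∀ S ∈ E.powerset, S ∉ ℬ →
      (subI E ℬ σ S \ S).Nonempty ∨ (subL E ℬ σ S ∩ S).Nonempty) := by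
  have nonbasis (S : Finset α) (hS : S ∈ E.powerset) (hSB : S ∉ ℬ) :
      (subI E ℬ σ S \ S).Nonempty ∨ (subL E ℬ σ S ∩ S).Nonempty := by
    rw [mem_iff_subI_sdiff_eq_empty_and_subL_inter_eq_empty hM hσ (mem_powerset.1 hS),
      not_and_or] at hSB
    simpa only [nonempty_iff_ne_empty] using hSB
  refine ⟨fun w y => sum_congr rfl fun S hS => ?_, fun x z => ?_, nonbasis⟩
  · rw [Nat.eq_sub_of_add_eq (card_subI_sdiff_add_rank hM hσ (mem_powerset.1 hS)),
      Nat.eq_sub_of_add_eq (card_subL_inter_add_rank hM hσ (mem_powerset.1 hS))]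
  · have hℬ : ℬ ⊆ E.powerset := fun B hB => mem_powerset.2 (hM.2.1 B hB)
    rw [← sum_subset hℬ fun S hS hSB => ?_]
    · refine sum_congr rfl fun B hB => ?_
      obtain ⟨hI, hL⟩ :=
        (mem_iff_subI_sdiff_eq_empty_and_subL_inter_eq_empty hM hσ (hM.2.1 B hB)).1 hB
      simp [hI, hL, subI_inter_eq_intSet, subL_sdiff_eq_extSet]
    · rcases nonbasis S hS hSB with h | h <;> simp [zero_pow (card_pos.2 h).ne']

end TutteActivities
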